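/- arXiv:2505.23496 — 2 statements merged into one kernel-verified Lean document; each statement's English description precedes it below -/
import Mathlib

section
/- Let Qˢ and Qᵀ be second-order distributions over probability measures with densities qˢ, qᵀ sharing a common support, such that qˢ(Q) ≥ bˢ > 0 and qᵀ(Q) ≤ 1 − bᵀ for all Q in the support. Let D = d_TV(Q̄ˢ, Q̄ᵀ) where Q̄ˢ, Q̄ᵀ are the barycenters. Then for every measurable set A, Var_{Qᵀ}(A) ≤ ((1 − bᵀ)/bˢ) · (Var_{Qˢ}(A) + D²), where Var_Q(A) = ∫ (Q(A) − Q̄(A))² q(Q) dQ. -/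
open scoped Classical BigOperators

/-- Total variation distance between two (mass) functions on a finite space:
the supremum over events of the absolute difference of their probabilities. -/
noncomputable def tv {X : Type*} [Fintype X] (p q : X → ℝ) : ℝ :=
  ⨆ A : Finset X, |(∑ x ∈ A, p x) - ∑ x ∈ A, q x|

/-- Barycenter of a (second-order) weighting `w` of tasks `Q`. -/
noncomputable def bary {X ι : Type*} [Fintype ι] (w : ι → ℝ) (Q : ι → X → ℝ) : X → ℝ :=
  fun x => ∑ i, w i * Q i x

/-- Pointwise variance of the second-order distribution at an event `A`. -/
noncomputable def varAt {X ι : Type*} [Fintype X] [Fintype ι]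
    (w : ι → ℝ) (Q : ι → X → ℝ) (A : Finset X) : ℝ :=
  ∑ i, w i * ((∑ x ∈ A, Q i x) - ∑ x ∈ A, bary w Q x) ^ 2

/-- Variance-transfer: the target variance at any event is bounded by
((1 − bᵀ)/bˢ)(source variance + D²), D the TV distance between the barycenters. -/
theorem stmt6 {X ι : Type*} [Fintype X] [Fintype ι]
    (qs qT : ι → ℝ) (bs bT : ℝ) (hbs : 0 < bs)
    (hqslb : ∀ i, bs ≤ qs i) (hqTub : ∀ i, qT i ≤ 1 - bT)
    (hqT0 : ∀ i, 0 ≤ qT i)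
    (hqs1 : ∑ i, qs i = 1) (hqT1 : ∑ i, qT i = 1)
    (Q : ι → X → ℝ)
    (A : Finset X) :
    varAt qT Q A
      ≤ ((1 - bT) / bs) * (varAt qs Q A + (tv (bary qs Q) (bary qT Q)) ^ 2) := by
  -- notation
  set a : ι → ℝ := fun i => ∑ x ∈ A, Q i x with ha
  set S : ℝ := ∑ x ∈ A, bary qs Q x with hSdef
  set T : ℝ := ∑ x ∈ A, bary qT Q x with hTdef
  -- nonemptiness of ι
  have hne : Nonempty ι := by
    by_contra h
    rw [not_nonempty_iff] at h
    simp [Finset.univ_eq_empty] at hqT1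
  have hbT : (0:ℝ) ≤ 1 - bT := le_trans (hqT0 (Classical.arbitrary ι)) (hqTub _)
  have hfac : (0:ℝ) ≤ (1 - bT) / bs := div_nonneg hbT hbs.le
  -- S and T are the means of a under qs, qT
  have hS : S = ∑ i, qs i * a i := by
    simp only [hSdef, bary, ha]
    rw [Finset.sum_comm]
    simp [Finset.mul_sum]
  have hT : T = ∑ i, qT i * a i := by
    simp only [hTdef, bary, ha]
    rw [Finset.sum_comm]
    simp [Finset.mul_sum]
  -- the key decomposition: ∑ qT (a-S)² = varAt qT + (T-S)²
  have hcross : ∑ i, qT i * (a i - T) = 0 := by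
    simp only [mul_sub]
    rw [Finset.sum_sub_distrib, ← Finset.sum_mul, hqT1, hT]
    ring
  have hdecomp : ∑ i, qT i * (a i - S) ^ 2
      = varAt qT Q A + (T - S) ^ 2 := by
    have : ∀ i, qT i * (a i - S) ^ 2
        = qT i * (a i - T) ^ 2 + 2 * (T - S) * (qT i * (a i - T))
          + (T - S) ^ 2 * qT i := by
      intro i; ring
    rw [Finset.sum_congr rfl fun i _ => this i]
    rw [Finset.sum_add_distrib, Finset.sum_add_distrib, ← Finset.mul_sum,
      ← Finset.mul_sum, hcross, hqT1, varAt]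
    ring
  -- step 1: varAt qT ≤ ∑ qT (a-S)²
  have step1 : varAt qT Q A ≤ ∑ i, qT i * (a i - S) ^ 2 := by
    rw [hdecomp]; nlinarith [sq_nonneg (T - S)]
  -- step 2: change of density
  have step2 : ∑ i, qT i * (a i - S) ^ 2
      ≤ ((1 - bT) / bs) * ∑ i, qs i * (a i - S) ^ 2 := by
    rw [Finset.mul_sum]
    apply Finset.sum_le_sum
    intro i _
    have h1 : qT i ≤ (1 - bT) / bs * qs i := by
      have := hqslb i
      calc qT i ≤ 1 - bT := hqTub i
        _ = (1 - bT) / bs * bs := by field_simp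
        _ ≤ (1 - bT) / bs * qs i := by
            exact mul_le_mul_of_nonneg_left this hfac
    have h2 : (0:ℝ) ≤ (a i - S) ^ 2 := sq_nonneg _
    calc qT i * (a i - S) ^ 2 ≤ ((1 - bT) / bs * qs i) * (a i - S) ^ 2 :=
          mul_le_mul_of_nonneg_right h1 h2
      _ = (1 - bT) / bs * (qs i * (a i - S) ^ 2) := by ring
  have hvs : ∑ i, qs i * (a i - S) ^ 2 = varAt qs Q A := rfl
  have htv2 : (0:ℝ) ≤ (tv (bary qs Q) (bary qT Q)) ^ 2 := sq_nonneg _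
  calc varAt qT Q A ≤ ∑ i, qT i * (a i - S) ^ 2 := step1
    _ ≤ ((1 - bT) / bs) * ∑ i, qs i * (a i - S) ^ 2 := step2
    _ = ((1 - bT) / bs) * varAt qs Q A := by rw [hvs]
    _ ≤ ((1 - bT) / bs) * (varAt qs Q A + (tv (bary qs Q) (bary qT Q)) ^ 2) := by
        apply mul_le_mul_of_nonneg_left _ hfac
        linarith
end

section
/- Let Qˢ and Qᵀ be second-order distributions over probability measures with densities bounded as qˢ ≥ bˢ > 0 and qᵀ ≤ 1 − bᵀ on a common support, and suppose d_TV(Qˢ, Qᵀ) ≤ ε (total variation between the second-order distributions). Then for every measurable set A, the target variance satisfies Var_{Qᵀ}(A) ≤ ((1 − bᵀ)/bˢ)(Var_{Qˢ}(A) + ε²). -/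
open scoped Classical BigOperators

/-- Variance transfer under a TV neighborhood between the second-order distributions:
Var_{𝒬ᵀ}(A) ≤ ((1 − bᵀ)/bˢ)(Var_{𝒬ˢ}(A) + ε²). -/
theorem stmt14 {X ι : Type*} [Fintype X] [Fintype ι]
    (qs qT : ι → ℝ) (bs bT : ℝ) (hbs : 0 < bs)
    (hqslb : ∀ i, bs ≤ qs i) (hqTub : ∀ i, qT i ≤ 1 - bT)
    (hqT0 : ∀ i, 0 ≤ qT i)
    (hqs1 : ∑ i, qs i = 1) (hqT1 : ∑ i, qT i = 1)
    (Q : ι → X → ℝ) (hQ0 : ∀ i x, 0 ≤ Q i x) (hQ1 : ∀ i, ∑ x, Q i x = 1)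
    (ε : ℝ) (hε : tv qs qT ≤ ε)
    (A : Finset X) :
    varAt qT Q A ≤ ((1 - bT) / bs) * (varAt qs Q A + ε ^ 2) := by
  classical
  set f : ι → ℝ := fun i => ∑ x ∈ A, Q i x with hf
  have hf0 : ∀ i, 0 ≤ f i := fun i => Finset.sum_nonneg fun x _ => hQ0 i x
  have hf1 : ∀ i, f i ≤ 1 := by
    intro i
    calc ∑ x ∈ A, Q i x
        ≤ ∑ x, Q i x := Finset.sum_le_sum_of_subset_of_nonneg
          (Finset.subset_univ A) (fun x _ _ => hQ0 i x)
      _ = 1 := hQ1 i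
  set μs : ℝ := ∑ i, qs i * f i with hμs
  set μT : ℝ := ∑ i, qT i * f i with hμT
  have hbary : ∀ w : ι → ℝ, ∑ x ∈ A, bary w Q x = ∑ i, w i * ∑ x ∈ A, Q i x := by
    intro w
    simp only [bary]
    rw [Finset.sum_comm]
    simp [Finset.mul_sum]
  have hvarS : varAt qs Q A = ∑ i, qs i * (f i - μs) ^ 2 := by
    simp [varAt, hbary qs, hf, hμs]
  have hvarT : varAt qT Q A = ∑ i, qT i * (f i - μT) ^ 2 := by
    simp [varAt, hbary qT, hf, hμT]
  -- tv bounds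
  have htvS : ∀ S : Finset ι, |(∑ i ∈ S, qs i) - ∑ i ∈ S, qT i| ≤ ε := by
    intro S
    refine le_trans ?_ hε
    exact le_ciSup (f := fun T : Finset ι => |(∑ i ∈ T, qs i) - ∑ i ∈ T, qT i|)
      (Set.Finite.bddAbove (Set.finite_range _)) S
  have hε0 : 0 ≤ ε := le_trans (abs_nonneg _) (htvS ∅)
  -- |μs - μT| ≤ ε
  have hdiff : μs - μT = ∑ i, (qs i - qT i) * f i := by
    rw [hμs, hμT, ← Finset.sum_sub_distrib]
    exact Finset.sum_congr rfl fun i _ => by ring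
  set S : Finset ι := Finset.univ.filter (fun i => 0 ≤ qs i - qT i) with hS
  have hD : |μs - μT| ≤ ε := by
    rw [hdiff, abs_le]
    constructor
    · -- lower bound
      have h1 : ∑ i ∈ Sᶜ, (qs i - qT i) ≤ ∑ i ∈ Sᶜ, (qs i - qT i) * f i := by
        refine Finset.sum_le_sum fun i hi => ?_
        have hneg : qs i - qT i ≤ 0 := by
          simp [hS, Finset.mem_compl] at hi
          linarith
        nlinarith [hf0 i, hf1 i]
      have h2 : (0:ℝ) ≤ ∑ i ∈ S, (qs i - qT i) * f i := by
        refine Finset.sum_nonneg fun i hi => ?_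
        have : 0 ≤ qs i - qT i := by simp [hS] at hi; linarith
        exact mul_nonneg this (hf0 i)
      have h3 : -ε ≤ ∑ i ∈ Sᶜ, (qs i - qT i) := by
        have := htvS Sᶜ
        rw [← Finset.sum_sub_distrib] at this
        linarith [abs_le.mp this]
      have hsplit : ∑ i, (qs i - qT i) * f i
          = (∑ i ∈ S, (qs i - qT i) * f i) + ∑ i ∈ Sᶜ, (qs i - qT i) * f i := by
        rw [Finset.sum_add_sum_compl]
      linarith
    · -- upper bound
      have h1 : ∑ i ∈ S, (qs i - qT i) * f i ≤ ∑ i ∈ S, (qs i - qT i) := by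
        refine Finset.sum_le_sum fun i hi => ?_
        have hpos : 0 ≤ qs i - qT i := by simp [hS] at hi; linarith
        nlinarith [hf0 i, hf1 i]
      have h2 : ∑ i ∈ Sᶜ, (qs i - qT i) * f i ≤ 0 := by
        refine Finset.sum_nonpos fun i hi => ?_
        have hneg : qs i - qT i ≤ 0 := by
          simp [hS, Finset.mem_compl] at hi
          linarith
        exact mul_nonpos_of_nonpos_of_nonneg hneg (hf0 i)
      have h3 : ∑ i ∈ S, (qs i - qT i) ≤ ε := by
        have := htvS S
        rw [← Finset.sum_sub_distrib] at this
        linarith [abs_le.mp this]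
      have hsplit : ∑ i, (qs i - qT i) * f i
          = (∑ i ∈ S, (qs i - qT i) * f i) + ∑ i ∈ Sᶜ, (qs i - qT i) * f i := by
        rw [Finset.sum_add_sum_compl]
      linarith
  -- decomposition
  have hzero : ∑ i, qs i * (f i - μs) = 0 := by
    have h : ∑ i, qs i * (f i - μs)
        = (∑ i, qs i * f i) - μs * ∑ i, qs i := by
      rw [Finset.mul_sum, ← Finset.sum_sub_distrib]
      exact Finset.sum_congr rfl fun i _ => by ring
    rw [h, hqs1, ← hμs]
    ring
  have hdecomp : ∑ i, qs i * (f i - μT) ^ 2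
      = (∑ i, qs i * (f i - μs) ^ 2) + (μs - μT) ^ 2 := by
    have hterm : ∀ i, qs i * (f i - μT) ^ 2
        = qs i * (f i - μs) ^ 2 + (2 * (μs - μT)) * (qs i * (f i - μs))
          + (μs - μT) ^ 2 * qs i := fun i => by ring
    rw [Finset.sum_congr rfl fun i _ => hterm i]
    rw [Finset.sum_add_distrib, Finset.sum_add_distrib, ← Finset.mul_sum, hzero,
      ← Finset.mul_sum, hqs1]
    ring
  -- 0 ≤ 1 - bT
  have hι : Nonempty ι := by
    by_contra h
    rw [not_nonempty_iff] at h
    rw [Finset.univ_eq_empty, Finset.sum_empty] at hqs1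
    norm_num at hqs1
  obtain ⟨i0⟩ := hι
  have h1bT : 0 ≤ 1 - bT := le_trans (hqT0 i0) (hqTub i0)
  have hc : 0 ≤ (1 - bT) / bs := div_nonneg h1bT hbs.le
  -- termwise comparison
  have hterm : ∀ i, qT i * (f i - μT) ^ 2 ≤ ((1 - bT) / bs) * qs i * (f i - μT) ^ 2 := by
    intro i
    have hq : qT i ≤ ((1 - bT) / bs) * qs i := by
      calc qT i ≤ 1 - bT := hqTub i
        _ = ((1 - bT) / bs) * bs := by field_simp
        _ ≤ ((1 - bT) / bs) * qs i := by
            exact mul_le_mul_of_nonneg_left (hqslb i) hc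
    exact mul_le_mul_of_nonneg_right hq (sq_nonneg _)
  have hD2 : (μs - μT) ^ 2 ≤ ε ^ 2 := by
    have h := abs_le.mp hD
    exact sq_le_sq' h.1 h.2
  calc varAt qT Q A = ∑ i, qT i * (f i - μT) ^ 2 := hvarT
    _ ≤ ∑ i, ((1 - bT) / bs) * qs i * (f i - μT) ^ 2 :=
        Finset.sum_le_sum fun i _ => hterm i
    _ = ((1 - bT) / bs) * ∑ i, qs i * (f i - μT) ^ 2 := by
        rw [Finset.mul_sum]
        exact Finset.sum_congr rfl fun i _ => by ring
    _ = ((1 - bT) / bs) * ((∑ i, qs i * (f i - μs) ^ 2) + (μs - μT) ^ 2) := by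
        rw [hdecomp]
    _ ≤ ((1 - bT) / bs) * (varAt qs Q A + ε ^ 2) := by
        rw [hvarS]
        exact mul_le_mul_of_nonneg_left (by linarith) hc
end
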